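/- Let B ∈ M_3(ℝ) be skew-symmetrizable and suppose the C-pattern of B is sign-coherent. Then for any reduced sequence w we have det(C^w) = det(G^w) ∈ {±1}, and the second duality D^{-1} (C^w)^T D G^w = I holds, where D is a skew-symmetrizer of B. -/
import Mathlib


open Matrix

noncomputable section

abbrev Mat3 := Matrix (Fin 3) (Fin 3) ℝ

def pPart {n : ℕ} (A : Matrix (Fin n) (Fin n) ℝ) : Matrix (Fin n) (Fin n) ℝ :=
  Matrix.of fun i j => max (A i j) 0

def Jmat {n : ℕ} (k : Fin n) : Matrix (Fin n) (Fin n) ℝ :=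
  Matrix.diagonal fun i => if i = k then -1 else 1

/-- `A^{•k}`: keep only column `k`. -/
def colSel {n : ℕ} (k : Fin n) (A : Matrix (Fin n) (Fin n) ℝ) : Matrix (Fin n) (Fin n) ℝ :=
  Matrix.of fun i j => if j = k then A i j else 0

/-- `A^{k•}`: keep only row `k`. -/
def rowSel {n : ℕ} (k : Fin n) (A : Matrix (Fin n) (Fin n) ℝ) : Matrix (Fin n) (Fin n) ℝ :=
  Matrix.of fun i j => if i = k then A i j else 0

/-- Matrix mutation in direction `k`. -/
def mutB {n : ℕ} (k : Fin n) (B : Matrix (Fin n) (Fin n) ℝ) : Matrix (Fin n) (Fin n) ℝ :=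
  (Jmat k + colSel k (pPart (-B))) * B * (Jmat k + rowSel k (pPart B))

/-- One step of the simultaneous `(B, C, G)` recursion, mutating at direction `k`. -/
def CGstep {n : ℕ} (B0 : Matrix (Fin n) (Fin n) ℝ)
    (p : Matrix (Fin n) (Fin n) ℝ × Matrix (Fin n) (Fin n) ℝ × Matrix (Fin n) (Fin n) ℝ)
    (k : Fin n) :
    Matrix (Fin n) (Fin n) ℝ × Matrix (Fin n) (Fin n) ℝ × Matrix (Fin n) (Fin n) ℝ :=
  (mutB k p.1,
   p.2.1 * Jmat k + p.2.1 * rowSel k (pPart p.1) + colSel k (pPart (-p.2.1)) * p.1,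
   p.2.2 * Jmat k + p.2.2 * colSel k (pPart (-p.1)) - B0 * colSel k (pPart (-p.2.1)))

def CGmat {n : ℕ} (B : Matrix (Fin n) (Fin n) ℝ) (w : List (Fin n)) :
    Matrix (Fin n) (Fin n) ℝ × Matrix (Fin n) (Fin n) ℝ × Matrix (Fin n) (Fin n) ℝ :=
  w.foldl (CGstep B) (B, 1, 1)

/-- The exchange matrix `B^w`. -/
def Bmat {n : ℕ} (B : Matrix (Fin n) (Fin n) ℝ) (w : List (Fin n)) : Matrix (Fin n) (Fin n) ℝ :=
  (CGmat B w).1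

/-- The `C`-matrix `C^w`. -/
def Cmat {n : ℕ} (B : Matrix (Fin n) (Fin n) ℝ) (w : List (Fin n)) : Matrix (Fin n) (Fin n) ℝ :=
  (CGmat B w).2.1

/-- The `G`-matrix `G^w`. -/
def Gmat {n : ℕ} (B : Matrix (Fin n) (Fin n) ℝ) (w : List (Fin n)) : Matrix (Fin n) (Fin n) ℝ :=
  (CGmat B w).2.2

/-- A sequence is reduced if consecutive entries differ. -/
def ReducedSeq {n : ℕ} (w : List (Fin n)) : Prop := w.Chain' (· ≠ ·)

def SkewSymmetrizable {n : ℕ} (B : Matrix (Fin n) (Fin n) ℝ) : Prop :=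
  ∃ d : Fin n → ℝ, (∀ i, 0 < d i) ∧ (Matrix.diagonal d * B)ᵀ = -(Matrix.diagonal d * B)

def cyclicPattern : Mat3 := !![0,-1,1; 1,0,-1; -1,1,0]

/-- A rank-3 exchange matrix is cyclic if its sign pattern is `± cyclicPattern`. -/
def IsCyclic3 (B : Mat3) : Prop :=
  (∀ i j, Real.sign (B i j) = cyclicPattern i j) ∨
  (∀ i j, Real.sign (B i j) = - cyclicPattern i j)

/-- `B` is cluster-cyclic if every iterated mutation along a reduced sequence is cyclic. -/
def ClusterCyclic (B : Mat3) : Prop :=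
  ∀ w : List (Fin 3), ReducedSeq w → IsCyclic3 (Bmat B w)

/-- `ε` is a family of tropical signs for the (sign-coherent) `C`-pattern of `B`. -/
def IsTropSigns (B : Mat3) (ε : List (Fin 3) → Fin 3 → ℝ) : Prop :=
  ∀ w : List (Fin 3), ReducedSeq w → ∀ i : Fin 3,
    (ε w i = 1 ∨ ε w i = -1) ∧ ∀ j, 0 ≤ ε w i * Cmat B w j i

namespace CGaux

set_option maxHeartbeats 1000000

lemma pmax_sub (x : ℝ) : max x 0 - x = max (-x) 0 := by
  rcases le_total x 0 with h | h
  · rw [max_eq_right h, max_eq_left (by linarith)]; ring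
  · rw [max_eq_left h, max_eq_right (by linarith)]; ring

def Ek (ε : ℝ) (k : Fin 3) (B : Mat3) : Mat3 := Jmat k + rowSel k (pPart (ε • B))

def Fk (ε : ℝ) (k : Fin 3) (B : Mat3) : Mat3 := Jmat k + colSel k (pPart (-(ε • B)))

lemma Ek_mul_Ek (ε : ℝ) (k : Fin 3) (B : Mat3) (hkk : B k k = 0) :
    Ek ε k B * Ek ε k B = 1 := by
  fin_cases k <;>
  · simp only [Fin.zero_eta, Fin.mk_one, Fin.reduceFinMk] at hkk
    ext i j
    fin_cases i <;> fin_cases j <;>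
      simp [Ek, Jmat, pPart, rowSel, Matrix.mul_apply, Fin.sum_univ_three,
        Matrix.diagonal_apply, Matrix.one_apply, Matrix.add_apply, Matrix.smul_apply,
        smul_eq_mul, hkk] <;> ring

lemma Fk_mul_Fk (ε : ℝ) (k : Fin 3) (B : Mat3) (hkk : B k k = 0) :
    Fk ε k B * Fk ε k B = 1 := by
  fin_cases k <;>
  · simp only [Fin.zero_eta, Fin.mk_one, Fin.reduceFinMk] at hkk
    ext i j
    fin_cases i <;> fin_cases j <;>
      simp [Fk, Jmat, pPart, colSel, Matrix.mul_apply, Fin.sum_univ_three,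
        Matrix.diagonal_apply, Matrix.one_apply, Matrix.add_apply, Matrix.smul_apply,
        Matrix.neg_apply, smul_eq_mul, hkk] <;> ring

lemma det_Ek (ε : ℝ) (k : Fin 3) (B : Mat3) (hkk : B k k = 0) :
    (Ek ε k B).det = -1 := by
  fin_cases k <;>
  · simp only [Fin.zero_eta, Fin.mk_one, Fin.reduceFinMk] at hkk
    simp [Ek, Jmat, pPart, rowSel, Matrix.det_fin_three, Matrix.diagonal_apply,
      Matrix.add_apply, Matrix.smul_apply, smul_eq_mul, hkk]

lemma det_Fk (ε : ℝ) (k : Fin 3) (B : Mat3) (hkk : B k k = 0) :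
    (Fk ε k B).det = -1 := by
  fin_cases k <;>
  · simp only [Fin.zero_eta, Fin.mk_one, Fin.reduceFinMk] at hkk
    simp [Fk, Jmat, pPart, colSel, Matrix.det_fin_three, Matrix.diagonal_apply,
      Matrix.add_apply, Matrix.smul_apply, Matrix.neg_apply, smul_eq_mul, hkk]

end CGaux
namespace CGaux2
open CGaux

set_option maxHeartbeats 2000000

lemma dualEF (ε : ℝ) (k : Fin 3) (B : Mat3) (d : Fin 3 → ℝ) (hd : ∀ i, 0 < d i)
    (hskew' : ∀ i j, d j * B j i = -(d i * B i j)) :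
    (Ek ε k B)ᵀ * Matrix.diagonal d * Fk ε k B = Matrix.diagonal d := by
  have hkk : B k k = 0 := by have := hskew' k k; nlinarith [hd k]
  have key : ∀ i j : Fin 3, d i * max (ε * B i j) 0 = d j * max (-(ε * B j i)) 0 := by
    intro i j
    rw [mul_max_of_nonneg _ _ (hd i).le, mul_max_of_nonneg _ _ (hd j).le, mul_zero, mul_zero]
    congr 1
    have h := hskew' i j
    linear_combination ε * h
  fin_cases k <;>
  · simp only [Fin.zero_eta, Fin.mk_one, Fin.reduceFinMk] at hkk
    ext i j
    fin_cases i <;> fin_cases j <;>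
      simp [Ek, Fk, Jmat, pPart, rowSel, colSel, Matrix.mul_apply, Fin.sum_univ_three,
        Matrix.diagonal_apply, Matrix.add_apply, Matrix.smul_apply, Matrix.neg_apply,
        Matrix.transpose_apply, smul_eq_mul, hkk] <;>
      linarith [key 0 1, key 0 2, key 1 0, key 1 2, key 2 0, key 2 1]

lemma mutB_eq (ε : ℝ) (hε : ε = 1 ∨ ε = -1) (k : Fin 3) (B : Mat3) (hkk : B k k = 0) :
    mutB k B = Fk ε k B * B * Ek ε k B := by
  have hmax : ∀ x : ℝ, max (-x) 0 = max x 0 - x := by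
    intro x; rw [← pmax_sub]
  rcases hε with h | h <;> subst h
  · simp [mutB, Fk, Ek, one_smul]
  · fin_cases k <;>
    · simp only [Fin.zero_eta, Fin.mk_one, Fin.reduceFinMk] at hkk
      ext i j
      fin_cases i <;> fin_cases j <;>
        simp [mutB, Ek, Fk, Jmat, pPart, rowSel, colSel, Matrix.mul_apply, Fin.sum_univ_three,
          Matrix.diagonal_apply, Matrix.add_apply, Matrix.smul_apply, Matrix.neg_apply,
          smul_eq_mul, hkk] <;>
      · simp only [hmax]
        ring

end CGaux2
namespace CGaux3
open CGaux CGaux2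

set_option maxHeartbeats 1000000

lemma colSel_mul (k : Fin 3) (A M : Mat3) : colSel k A * M = A * rowSel k M := by
  ext i j
  simp [colSel, rowSel, Matrix.mul_apply, ite_mul, mul_ite, mul_zero, zero_mul]

lemma mul_colSel (k : Fin 3) (M A : Mat3) : M * colSel k A = colSel k (M * A) := by
  ext i j
  by_cases hj : j = k <;>
    simp [colSel, Matrix.mul_apply, hj, mul_ite, mul_zero]

lemma pPart_neg (X : Mat3) : pPart (-X) = pPart X - X := by
  ext i j
  simp [pPart, ← pmax_sub]

lemma rowSel_sub (k : Fin 3) (X Y : Mat3) : rowSel k (X - Y) = rowSel k X - rowSel k Y := by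
  ext i j
  simp [rowSel, Matrix.sub_apply]
  split <;> simp

lemma colSel_add (k : Fin 3) (X Y : Mat3) : colSel k (X + Y) = colSel k X + colSel k Y := by
  ext i j
  simp [colSel, Matrix.add_apply]
  split <;> simp

lemma step (B0 Bw C G : Mat3) (k : Fin 3) (hBC : B0 * C = G * Bw)
    (hsc : (∀ j, 0 ≤ C j k) ∨ (∀ j, C j k ≤ 0)) :
    ∃ ε, (ε = 1 ∨ ε = -1) ∧
      C * Jmat k + C * rowSel k (pPart Bw) + colSel k (pPart (-C)) * Bw = C * Ek ε k Bw ∧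
      G * Jmat k + G * colSel k (pPart (-Bw)) - B0 * colSel k (pPart (-C)) = G * Fk ε k Bw := by
  rcases hsc with h | h
  · have h0 : colSel k (pPart (-C)) = 0 := by
      ext i j
      simp only [colSel, pPart, Matrix.of_apply, Matrix.neg_apply, Matrix.zero_apply]
      split
      · next hj => subst hj; exact max_eq_right (neg_nonpos.2 (h i))
      · rfl
    refine ⟨1, Or.inl rfl, ?_, ?_⟩
    · rw [h0, Matrix.zero_mul, add_zero]
      simp [Ek, one_smul, mul_add]
    · rw [h0, Matrix.mul_zero, sub_zero]
      simp [Fk, one_smul, mul_add]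
  · have h0 : colSel k (pPart (-C)) = colSel k (-C) := by
      ext i j
      simp only [colSel, pPart, Matrix.of_apply, Matrix.neg_apply]
      split
      · next hj => subst hj; exact max_eq_left (neg_nonneg.2 (h i))
      · rfl
    refine ⟨-1, Or.inr rfl, ?_, ?_⟩
    · rw [h0, colSel_mul]
      have hE : Ek (-1) k Bw = Jmat k + (rowSel k (pPart Bw) - rowSel k Bw) := by
        rw [Ek, neg_one_smul, pPart_neg, rowSel_sub]
      rw [hE, mul_add, mul_sub]
      rw [show (-C) * rowSel k Bw = -(C * rowSel k Bw) by simp]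
      abel
    · rw [h0]
      have h1 : B0 * colSel k (-C) = -(G * colSel k Bw) := by
        rw [mul_colSel, mul_colSel, Matrix.mul_neg, hBC]
        ext i j
        simp [colSel]
        split <;> simp
      have hF : Fk (-1) k Bw = Jmat k + (colSel k (pPart (-Bw)) + colSel k Bw) := by
        rw [Fk, neg_one_smul, neg_neg, show pPart Bw = pPart (-Bw) + Bw by rw [pPart_neg]; abel,
          colSel_add]
      rw [hF, mul_add, mul_add, h1]
      abel

end CGaux3
namespace CGmain
open CGaux CGaux2 CGaux3

set_option maxHeartbeats 1000000

lemma CGmat_append (B : Mat3) (w : List (Fin 3)) (k : Fin 3) :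
    CGmat B (w ++ [k]) = CGstep B (CGmat B w) k := by
  simp [CGmat, List.foldl_append]

lemma skew_pointwise {d : Fin 3 → ℝ} {M : Mat3}
    (h : (Matrix.diagonal d * M)ᵀ = -(Matrix.diagonal d * M)) :
    ∀ i j, d j * M j i = -(d i * M i j) := by
  intro i j
  have := congrFun (congrFun h i) j
  simpa [Matrix.diagonal_mul, Matrix.transpose_apply, Matrix.neg_apply] using this

lemma invariants (B : Mat3) (d : Fin 3 → ℝ) (hd : ∀ i, 0 < d i)
    (hskew : (Matrix.diagonal d * B)ᵀ = -(Matrix.diagonal d * B))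
    (hsc : ∀ w : List (Fin 3), ReducedSeq w → ∀ i : Fin 3,
      (∀ j, 0 ≤ Cmat B w j i) ∨ (∀ j, Cmat B w j i ≤ 0)) :
    ∀ w : List (Fin 3), ReducedSeq w →
      ((Matrix.diagonal d * Bmat B w)ᵀ = -(Matrix.diagonal d * Bmat B w)) ∧
      (Cmat B w)ᵀ * Matrix.diagonal d * Gmat B w = Matrix.diagonal d ∧
      B * Cmat B w = Gmat B w * Bmat B w ∧
      (Cmat B w).det = (Gmat B w).det ∧
      ((Cmat B w).det = 1 ∨ (Cmat B w).det = -1) := by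
  intro w
  induction w using List.reverseRecOn with
  | nil =>
    intro _
    refine ⟨hskew, ?_, ?_, ?_, ?_⟩ <;>
      simp [Bmat, Cmat, Gmat, CGmat]
  | append_singleton w k ih =>
    intro hw'
    have hw : ReducedSeq w := by
      have h2 : List.Chain' (· ≠ ·) (w ++ [k]) := hw'
      exact (List.isChain_append.mp h2).1
    obtain ⟨ihskew, ihdual, ihBC, ihdet, ihpm⟩ := ih hw
    set D := Matrix.diagonal d with hD
    set Bw := Bmat B w with hBw
    set C := Cmat B w with hC
    set G := Gmat B w with hG
    have hskew' : ∀ i j, d j * Bw j i = -(d i * Bw i j) := skew_pointwise ihskew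
    have hkk : Bw k k = 0 := by have := hskew' k k; nlinarith [hd k]
    -- unfold the new matrices
    have hBnew : Bmat B (w ++ [k]) = mutB k Bw := by
      rw [Bmat, CGmat_append]; rfl
    have hCnew : Cmat B (w ++ [k])
        = C * Jmat k + C * rowSel k (pPart Bw) + colSel k (pPart (-C)) * Bw := by
      rw [Cmat, CGmat_append]; rfl
    have hGnew : Gmat B (w ++ [k])
        = G * Jmat k + G * colSel k (pPart (-Bw)) - B * colSel k (pPart (-C)) := by
      rw [Gmat, CGmat_append]; rfl
    obtain ⟨ε, hε, hCE, hGF⟩ := step B Bw C G k ihBC (hsc w hw k)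
    rw [hCnew, hCE] at *
    rw [hGnew, hGF] at *
    -- facts about Ek, Fk
    have hdual1 : (Ek 1 k Bw)ᵀ * D * Fk 1 k Bw = D := dualEF 1 k Bw d hd hskew'
    have hdualε : (Ek ε k Bw)ᵀ * D * Fk ε k Bw = D := dualEF ε k Bw d hd hskew'
    have hEinv : Ek 1 k Bw * Ek 1 k Bw = 1 := Ek_mul_Ek 1 k Bw hkk
    have hFinvε : Fk ε k Bw * Fk ε k Bw = 1 := Fk_mul_Fk ε k Bw hkk
    have hEET : (Ek 1 k Bw)ᵀ * (Ek 1 k Bw)ᵀ = 1 := by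
      rw [← Matrix.transpose_mul, hEinv, Matrix.transpose_one]
    have hDF : D * Fk 1 k Bw = (Ek 1 k Bw)ᵀ * D := by
      have h3 := congrArg (fun X => (Ek 1 k Bw)ᵀ * X) hdual1
      simpa [← mul_assoc, hEET] using h3
    have hB1 : mutB k Bw = Fk 1 k Bw * Bw * Ek 1 k Bw := mutB_eq 1 (Or.inl rfl) k Bw hkk
    have hBε : mutB k Bw = Fk ε k Bw * Bw * Ek ε k Bw := mutB_eq ε hε k Bw hkk
    refine ⟨?_, ?_, ?_, ?_, ?_⟩
    · -- skew
      rw [hBnew, hB1]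
      have h1 : D * (Fk 1 k Bw * Bw * Ek 1 k Bw)
          = (Ek 1 k Bw)ᵀ * (D * Bw) * Ek 1 k Bw := by
        rw [show D * (Fk 1 k Bw * Bw * Ek 1 k Bw) = (D * Fk 1 k Bw) * Bw * Ek 1 k Bw by
          noncomm_ring, hDF]
        noncomm_ring
      rw [h1, Matrix.transpose_mul, Matrix.transpose_mul, Matrix.transpose_transpose, ihskew]
      noncomm_ring
    · -- second duality
      rw [Matrix.transpose_mul]
      calc (Ek ε k Bw)ᵀ * Cᵀ * D * (G * Fk ε k Bw)
          = (Ek ε k Bw)ᵀ * (Cᵀ * D * G) * Fk ε k Bw := by noncomm_ring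
        _ = D := by rw [ihdual]; exact hdualε
    · -- first duality
      rw [hBnew, hBε]
      calc B * (C * Ek ε k Bw) = (B * C) * Ek ε k Bw := by noncomm_ring
        _ = G * Bw * Ek ε k Bw := by rw [ihBC]
        _ = (G * Fk ε k Bw) * (Fk ε k Bw * Bw * Ek ε k Bw) := by
            rw [show G * Fk ε k Bw * (Fk ε k Bw * Bw * Ek ε k Bw)
              = G * (Fk ε k Bw * Fk ε k Bw) * Bw * Ek ε k Bw by noncomm_ring, hFinvε]
            noncomm_ring
    · rw [Matrix.det_mul, Matrix.det_mul, ihdet, det_Ek ε k Bw hkk, det_Fk ε k Bw hkk]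
    · rw [Matrix.det_mul, det_Ek ε k Bw hkk]
      rcases ihpm with h | h <;> rw [h] <;> [right; left] <;> norm_num

end CGmain
theorem det_and_second_duality (B : Mat3) (d : Fin 3 → ℝ) (hd : ∀ i, 0 < d i)
    (hskew : (Matrix.diagonal d * B)ᵀ = -(Matrix.diagonal d * B))
    (hsc : ∀ w : List (Fin 3), ReducedSeq w → ∀ i : Fin 3,
      (∀ j, 0 ≤ Cmat B w j i) ∨ (∀ j, Cmat B w j i ≤ 0))
    (w : List (Fin 3)) (hw : ReducedSeq w) :
    (Cmat B w).det = (Gmat B w).det ∧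
    ((Cmat B w).det = 1 ∨ (Cmat B w).det = -1) ∧
    (Matrix.diagonal d)⁻¹ * (Cmat B w)ᵀ * Matrix.diagonal d * Gmat B w = 1 := by
  obtain ⟨_, hdual, _, hdet, hpm⟩ := CGmain.invariants B d hd hskew hsc w hw
  refine ⟨hdet, hpm, ?_⟩
  have hdet0 : (Matrix.diagonal d).det ≠ 0 := by
    rw [Matrix.det_diagonal]
    exact ne_of_gt (Finset.prod_pos fun i _ => hd i)
  calc (Matrix.diagonal d)⁻¹ * (Cmat B w)ᵀ * Matrix.diagonal d * Gmat B w
      = (Matrix.diagonal d)⁻¹ * ((Cmat B w)ᵀ * Matrix.diagonal d * Gmat B w) := by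
        noncomm_ring
    _ = (Matrix.diagonal d)⁻¹ * Matrix.diagonal d := by rw [hdual]
    _ = 1 := Matrix.nonsing_inv_mul _ (isUnit_iff_ne_zero.mpr hdet0)
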